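/- arXiv:1305.2304 — 3 statements merged into one kernel-verified Lean document; each statement's English description precedes it below -/
import Mathlib

section
/- Let B₁ and B₂ be Banach algebras with commuting bounded representations π₁ : B₁ → B(X) and π₂ : B₂ → B(X) on a Banach space X, and let π₁ ⊙̂ π₂ : B₁ ⊗̂ B₂ → B(X) be the induced bounded representation of the projective tensor product. Then π₁ ⊙̂ π₂ is non-degenerate if and only if both π₁ and π₂ are non-degenerate. -/
/-!
Every vector `φ(a ⊗ b) x = π₁(a) (π₂(b) x) = π₂(b) (π₁(a) x)` lies in the span of `π₁(B₁) X`
and in that of `π₂(B₂) X`, so non-degeneracy of `φ` passes to `π₁` and `π₂`. Conversely the same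
identity shows that `π₂(b)` maps the span of `π₁(B₁) X` into the span of `φ(B₁ ⊗ B₂) X`; as the
former is dense and `π₂(b)` is continuous, `π₂(B₂) X` lies in the closure of the latter.
-/

open scoped TensorProduct

section EssentialSpan

variable {𝕜 X ι : Type*} [NormedField 𝕜] [NormedAddCommGroup X] [NormedSpace 𝕜 X]

def essentialSpan (T : ι → X →L[𝕜] X) : Submodule 𝕜 X :=
  Submodule.span 𝕜 {y | ∃ i x, y = T i x}

theorem essentialSpan_le_iff {T : ι → X →L[𝕜] X} {p : Submodule 𝕜 X} :
    essentialSpan T ≤ p ↔ ∀ i x, T i x ∈ p := by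
  refine Submodule.span_le.trans ⟨fun h i x => h ⟨i, x, rfl⟩, ?_⟩
  rintro h _ ⟨i, x, rfl⟩
  exact h i x

theorem dense_of_dense_essentialSpan {T : ι → X →L[𝕜] X} {p q : Submodule 𝕜 X}
    (hp : Dense (p : Set X)) (hT : Dense (essentialSpan T : Set X))
    (hmaps : ∀ i, Set.MapsTo (T i) p q) : Dense (q : Set X) := by
  have hle : essentialSpan T ≤ q.topologicalClosure :=
    essentialSpan_le_iff.2 fun i x => map_mem_closure (T i).continuous (hp x) (hmaps i)
  exact dense_closure.1 (hT.mono hle)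

theorem essentialSpan_le_of_tmul {M N : Type*} [AddCommGroup M] [Module 𝕜 M]
    [AddCommGroup N] [Module 𝕜 N] (φ : M ⊗[𝕜] N →ₗ[𝕜] X →L[𝕜] X) {p : Submodule 𝕜 X}
    (h : ∀ m n x, φ (m ⊗ₜ n) x ∈ p) : essentialSpan φ ≤ p := by
  refine essentialSpan_le_iff.2 fun t x => ?_
  induction t using TensorProduct.induction_on with
  | zero => simp
  | tmul m n => exact h m n x
  | add t₁ t₂ h₁ h₂ => simpa using p.add_mem h₁ h₂

end EssentialSpan

theorem stmt4_general {B₁ B₂ X : Type*} [NormedRing B₁] [NormedRing B₂]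
    [NormedAlgebra ℂ B₁] [NormedAlgebra ℂ B₂]
    [NormedAddCommGroup X] [NormedSpace ℂ X]
    (π₁ : B₁ →L[ℂ] X →L[ℂ] X) (π₂ : B₂ →L[ℂ] X →L[ℂ] X)
    (hcomm : ∀ b₁ b₂, π₁ b₁ * π₂ b₂ = π₂ b₂ * π₁ b₁)
    (φ : B₁ ⊗[ℂ] B₂ →ₗ[ℂ] X →L[ℂ] X)
    (hφ : ∀ b₁ b₂, φ (b₁ ⊗ₜ[ℂ] b₂) = π₁ b₁ * π₂ b₂) :
    Dense (↑(Submodule.span ℂ {y : X | ∃ t x, y = φ t x}) : Set X) ↔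
      (Dense (↑(Submodule.span ℂ {y : X | ∃ b x, y = π₁ b x}) : Set X) ∧
       Dense (↑(Submodule.span ℂ {y : X | ∃ b x, y = π₂ b x}) : Set X)) := by
  have hφ' : ∀ a b x, φ (a ⊗ₜ b) x = π₂ b (π₁ a x) := fun a b x => by
    rw [hφ, hcomm]; rfl
  change Dense (essentialSpan φ : Set X) ↔
    Dense (essentialSpan π₁ : Set X) ∧ Dense (essentialSpan π₂ : Set X)
  refine ⟨fun h => ⟨h.mono ?_, h.mono ?_⟩, fun ⟨h₁, h₂⟩ => ?_⟩
  · exact essentialSpan_le_of_tmul φ fun a b x =>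
      hφ a b ▸ Submodule.subset_span ⟨a, π₂ b x, rfl⟩
  · exact essentialSpan_le_of_tmul φ fun a b x =>
      hφ' a b x ▸ Submodule.subset_span ⟨b, π₁ a x, rfl⟩
  · refine dense_of_dense_essentialSpan h₁ h₂ fun b => ?_
    have hle : essentialSpan π₁ ≤ (essentialSpan φ).comap (π₂ b : X →ₗ[ℂ] X) :=
      essentialSpan_le_iff.2 fun a x => Submodule.subset_span ⟨a ⊗ₜ b, x, (hφ' a b x).symm⟩
    exact fun y hy => hle hy

/-- For commuting bounded representations `π₁, π₂` of Banach algebras on a Banach space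
`X`, the induced representation `π₁ ⊙̂ π₂` of the (projective) tensor product (the
unique one with `φ(b₁ ⊗ b₂) = π₁(b₁) π₂(b₂)`) is non-degenerate if and only if both
`π₁` and `π₂` are non-degenerate. -/
theorem stmt4 {B₁ B₂ X : Type*} [NormedRing B₁] [NormedRing B₂]
    [NormedAlgebra ℂ B₁] [NormedAlgebra ℂ B₂]
    [CompleteSpace B₁] [CompleteSpace B₂]
    [NormedAddCommGroup X] [NormedSpace ℂ X] [CompleteSpace X]
    (π₁ : B₁ →L[ℂ] X →L[ℂ] X) (π₂ : B₂ →L[ℂ] X →L[ℂ] X)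
    (hπ₁ : ∀ a b, π₁ (a * b) = π₁ a * π₁ b)
    (hπ₂ : ∀ a b, π₂ (a * b) = π₂ a * π₂ b)
    (hcomm : ∀ b₁ b₂, π₁ b₁ * π₂ b₂ = π₂ b₂ * π₁ b₁)
    (φ : B₁ ⊗[ℂ] B₂ →ₗ[ℂ] X →L[ℂ] X)
    (hφ : ∀ b₁ b₂, φ (b₁ ⊗ₜ[ℂ] b₂) = π₁ b₁ * π₂ b₂) :
    Dense (↑(Submodule.span ℂ {y : X | ∃ t x, y = φ t x}) : Set X) ↔
      (Dense (↑(Submodule.span ℂ {y : X | ∃ b x, y = π₁ b x}) : Set X) ∧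
       Dense (↑(Submodule.span ℂ {y : X | ∃ b x, y = π₂ b x}) : Set X)) :=
  stmt4_general π₁ π₂ hcomm φ hφ
end

section
/- Let B₁ and B₂ be Banach algebras, each having a bounded approximate left identity, and let X be a Banach space. If ρ₁, σ₁ : B₁ → B(X) and ρ₂, σ₂ : B₂ → B(X) are commuting pairs of bounded representations such that the induced representations of the projective tensor product agree, i.e., ρ₁(b₁)ρ₂(b₂) = σ₁(b₁)σ₂(b₂) for all b₁ ∈ B₁, b₂ ∈ B₂, and this common representation is non-degenerate, then ρ₁ = σ₁ and ρ₂ = σ₂. -/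
/-!
Writing `P(b₁, b₂) = ρ₁(b₁)ρ₂(b₂) = σ₁(b₁)σ₂(b₂)`, multiplicativity gives
`ρ₁(a)P(b₁, b₂) = P(ab₁, b₂) = σ₁(a)P(b₁, b₂)`, and, moving `ρ₂(a)` past `ρ₁(b₁)` with the
commutation relations, likewise `ρ₂(a)P(b₁, b₂) = σ₂(a)P(b₁, b₂)`. So `ρᵢ(a)` and `σᵢ(a)` agree
on the ranges of all `P(b₁, b₂)`, whose span is dense by non-degeneracy.
-/

open Filter

section Semigroup

variable {M B₁ B₂ : Type*} [Semigroup M]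

theorem left_factor_mul_prod_eq [Mul B₁] {ρ₁ σ₁ : B₁ → M} {ρ₂ σ₂ : B₂ → M}
    (hρ₁ : ∀ a b, ρ₁ (a * b) = ρ₁ a * ρ₁ b) (hσ₁ : ∀ a b, σ₁ (a * b) = σ₁ a * σ₁ b)
    (hagree : ∀ b₁ b₂, ρ₁ b₁ * ρ₂ b₂ = σ₁ b₁ * σ₂ b₂) (a b₁ : B₁) (b₂ : B₂) :
    ρ₁ a * (ρ₁ b₁ * ρ₂ b₂) = σ₁ a * (ρ₁ b₁ * ρ₂ b₂) := by
  rw [← mul_assoc, ← hρ₁, hagree, hσ₁, mul_assoc, hagree]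

theorem right_factor_mul_prod_eq [Mul B₂] {ρ₁ σ₁ : B₁ → M} {ρ₂ σ₂ : B₂ → M}
    (hρ₂ : ∀ a b, ρ₂ (a * b) = ρ₂ a * ρ₂ b) (hσ₂ : ∀ a b, σ₂ (a * b) = σ₂ a * σ₂ b)
    (hρcomm : ∀ b₁ b₂, ρ₁ b₁ * ρ₂ b₂ = ρ₂ b₂ * ρ₁ b₁)
    (hσcomm : ∀ b₁ b₂, σ₁ b₁ * σ₂ b₂ = σ₂ b₂ * σ₁ b₁)
    (hagree : ∀ b₁ b₂, ρ₁ b₁ * ρ₂ b₂ = σ₁ b₁ * σ₂ b₂) (a : B₂) (b₁ : B₁) (b₂ : B₂) :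
    ρ₂ a * (ρ₁ b₁ * ρ₂ b₂) = σ₂ a * (ρ₁ b₁ * ρ₂ b₂) := by
  have hagree' : ∀ b₂ b₁, ρ₂ b₂ * ρ₁ b₁ = σ₂ b₂ * σ₁ b₁ := fun b₂ b₁ => by
    rw [← hρcomm, ← hσcomm, hagree]
  rw [hρcomm]
  exact left_factor_mul_prod_eq hρ₂ hσ₂ hagree' a b₂ b₁

end Semigroup

theorem ContinuousLinearMap.eq_of_mul_prod_eq {𝕜 X ι κ : Type*} [NontriviallyNormedField 𝕜]
    [NormedAddCommGroup X] [NormedSpace 𝕜 X] {S : ι → X →L[𝕜] X} {T : κ → X →L[𝕜] X}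
    (hdense : Dense (↑(Submodule.span 𝕜 {y : X | ∃ i j x, y = S i (T j x)}) : Set X))
    {f g : X →L[𝕜] X} (h : ∀ i j, f * (S i * T j) = g * (S i * T j)) : f = g := by
  refine ContinuousLinearMap.ext_on hdense ?_
  rintro _ ⟨i, j, x, rfl⟩
  exact congr($(h i j) x)

theorem stmt5_general {B₁ B₂ X : Type*} [NormedRing B₁] [NormedRing B₂]
    [NormedAlgebra ℂ B₁] [NormedAlgebra ℂ B₂]
    [NormedAddCommGroup X] [NormedSpace ℂ X]
    (ρ₁ σ₁ : B₁ →L[ℂ] X →L[ℂ] X) (ρ₂ σ₂ : B₂ →L[ℂ] X →L[ℂ] X)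
    (hρ₁ : ∀ a b, ρ₁ (a * b) = ρ₁ a * ρ₁ b) (hσ₁ : ∀ a b, σ₁ (a * b) = σ₁ a * σ₁ b)
    (hρ₂ : ∀ a b, ρ₂ (a * b) = ρ₂ a * ρ₂ b) (hσ₂ : ∀ a b, σ₂ (a * b) = σ₂ a * σ₂ b)
    (hρcomm : ∀ b₁ b₂, ρ₁ b₁ * ρ₂ b₂ = ρ₂ b₂ * ρ₁ b₁)
    (hσcomm : ∀ b₁ b₂, σ₁ b₁ * σ₂ b₂ = σ₂ b₂ * σ₁ b₁)
    (hagree : ∀ b₁ b₂, ρ₁ b₁ * ρ₂ b₂ = σ₁ b₁ * σ₂ b₂)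
    (hnd : Dense (↑(Submodule.span ℂ
      {y : X | ∃ b₁ b₂ x, y = ρ₁ b₁ (ρ₂ b₂ x)}) : Set X)) :
    ρ₁ = σ₁ ∧ ρ₂ = σ₂ :=
  ⟨ContinuousLinearMap.ext fun a => ContinuousLinearMap.eq_of_mul_prod_eq hnd
      (left_factor_mul_prod_eq hρ₁ hσ₁ hagree a),
    ContinuousLinearMap.ext fun a => ContinuousLinearMap.eq_of_mul_prod_eq hnd
      (right_factor_mul_prod_eq hρ₂ hσ₂ hρcomm hσcomm hagree a)⟩

/-- Let `B₁, B₂` be Banach algebras, each with a bounded approximate left identity.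
If `ρ₁, σ₁ : B₁ → B(X)` and `ρ₂, σ₂ : B₂ → B(X)` are commuting pairs of bounded
representations with `ρ₁(b₁)ρ₂(b₂) = σ₁(b₁)σ₂(b₂)` for all `b₁, b₂`, and this common
representation of the tensor product is non-degenerate, then `ρ₁ = σ₁` and `ρ₂ = σ₂`. -/
theorem stmt5 {B₁ B₂ X : Type*} [NormedRing B₁] [NormedRing B₂]
    [NormedAlgebra ℂ B₁] [NormedAlgebra ℂ B₂]
    [CompleteSpace B₁] [CompleteSpace B₂]
    [NormedAddCommGroup X] [NormedSpace ℂ X] [CompleteSpace X]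
    {ι₁ ι₂ : Type*} [Nonempty ι₁] [SemilatticeSup ι₁] [Nonempty ι₂] [SemilatticeSup ι₂]
    (u : ι₁ → B₁) (M₁ : ℝ) (hu : ∀ i, ‖u i‖ ≤ M₁)
    (huapprox : ∀ b : B₁, Tendsto (fun i => u i * b) atTop (nhds b))
    (v : ι₂ → B₂) (M₂ : ℝ) (hv : ∀ i, ‖v i‖ ≤ M₂)
    (hvapprox : ∀ b : B₂, Tendsto (fun i => v i * b) atTop (nhds b))
    (ρ₁ σ₁ : B₁ →L[ℂ] X →L[ℂ] X) (ρ₂ σ₂ : B₂ →L[ℂ] X →L[ℂ] X)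
    (hρ₁ : ∀ a b, ρ₁ (a * b) = ρ₁ a * ρ₁ b) (hσ₁ : ∀ a b, σ₁ (a * b) = σ₁ a * σ₁ b)
    (hρ₂ : ∀ a b, ρ₂ (a * b) = ρ₂ a * ρ₂ b) (hσ₂ : ∀ a b, σ₂ (a * b) = σ₂ a * σ₂ b)
    (hρcomm : ∀ b₁ b₂, ρ₁ b₁ * ρ₂ b₂ = ρ₂ b₂ * ρ₁ b₁)
    (hσcomm : ∀ b₁ b₂, σ₁ b₁ * σ₂ b₂ = σ₂ b₂ * σ₁ b₁)
    (hagree : ∀ b₁ b₂, ρ₁ b₁ * ρ₂ b₂ = σ₁ b₁ * σ₂ b₂)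
    (hnd : Dense (↑(Submodule.span ℂ
      {y : X | ∃ b₁ b₂ x, y = ρ₁ b₁ (ρ₂ b₂ x)}) : Set X)) :
    ρ₁ = σ₁ ∧ ρ₂ = σ₂ :=
  stmt5_general ρ₁ σ₁ ρ₂ σ₂ hρ₁ hσ₁ hρ₂ hσ₂ hρcomm hσcomm hagree hnd
end

section
/- Let (A,G,α) be a Banach algebra dynamical system with ‖α_s‖ ≤ C_α for all s, X a Banach space, π : A → B(X) a bounded representation, and ω a weight on G. Define for h ∈ C_c(G,X), a ∈ A, s ∈ G: (π̃(a)h)(s) := π(α_s⁻¹(a)) h(s). Then π̃(a) extends to a bounded operator on L^p(G,X,ω) for 1 ≤ p < ∞, π̃ is an algebra homomorphism, and ‖π̃(a)‖ ≤ C_α ‖π‖ ‖a‖ for all a ∈ A. -/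
/-!
Pointwise `‖π(α_{s⁻¹}(a)) h(s)‖ ≤ C_α ‖π‖ ‖a‖ ‖h(s)‖`; raising this to the `p`-th power,
weighting by `ω` and integrating gives the bound, provided `‖h‖^p ω` is integrable. That holds
because a measurable submultiplicative weight is bounded on compact sets: by Steinhaus, some set
`E` of positive Haar measure on which `ω` and `ω ∘ inv` are bounded has `E / E` a neighbourhood
of `1`, on which `ω` is bounded by submultiplicativity; translates of it cover any compact set.
-/

open MeasureTheory Set Topology Pointwise

section SubmultiplicativeWeight

variable {G : Type*} [Group G] [TopologicalSpace G] [IsTopologicalGroup G] [LocallyCompactSpace G]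
  [MeasurableSpace G] [BorelSpace G] {ω : G → ℝ}

lemma exists_mem_nhds_one_bddAbove_image_of_submultiplicative (hmeas : Measurable ω)
    (hnn : ∀ s, 0 ≤ ω s) (hsub : ∀ s t, ω (s * t) ≤ ω s * ω t) :
    ∃ V ∈ 𝓝 (1 : G), BddAbove (ω '' V) := by
  obtain ⟨K, hK, hK1⟩ := exists_compact_mem_nhds (1 : G)
  let U := interior K
  let E : ℕ → Set G := fun n => {s | ω s ≤ n ∧ ω s⁻¹ ≤ n} ∩ U
  have hE_meas : ∀ n, MeasurableSet (E n) := fun n =>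
    ((hmeas measurableSet_Iic).inter ((hmeas.comp measurable_inv) measurableSet_Iic)).inter
      isOpen_interior.measurableSet
  have hE_cover : ⋃ n, E n = U := by
    refine Subset.antisymm (iUnion_subset fun n => inter_subset_right) fun s hs => ?_
    obtain ⟨n, hn⟩ := exists_nat_ge (max (ω s) (ω s⁻¹))
    exact mem_iUnion.2 ⟨n, ⟨(le_max_left _ _).trans hn, (le_max_right _ _).trans hn⟩, hs⟩
  obtain ⟨n, hn⟩ : ∃ n, 0 < Measure.haar (E n) :=
    exists_measure_pos_of_not_measure_iUnion_null
      (by rw [hE_cover]; exact (Measure.measure_pos_of_mem_nhds Measure.haar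
        (isOpen_interior.mem_nhds (mem_interior_iff_mem_nhds.2 hK1))).ne')
  have hE_fin : Measure.haar (E n) ≠ ⊤ :=
    measure_ne_top_of_subset (inter_subset_right.trans interior_subset) hK.measure_ne_top
  refine ⟨E n / E n, Measure.div_mem_nhds_one_of_haar_pos_ne_top _ _ (hE_meas n) hn hE_fin,
    n * n, ?_⟩
  rintro _ ⟨_, ⟨x, hx, y, hy, rfl⟩, rfl⟩
  calc ω (x / y) = ω (x * y⁻¹) := by rw [div_eq_mul_inv]
    _ ≤ ω x * ω y⁻¹ := hsub _ _
    _ ≤ n * n := mul_le_mul hx.1.1 hy.1.2 (hnn _) n.cast_nonneg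

lemma IsCompact.bddAbove_image_of_submultiplicative (hmeas : Measurable ω)
    (hnn : ∀ s, 0 ≤ ω s) (hsub : ∀ s t, ω (s * t) ≤ ω s * ω t) {K : Set G} (hK : IsCompact K) :
    BddAbove (ω '' K) := by
  obtain ⟨V, hV, M, hM⟩ := exists_mem_nhds_one_bddAbove_image_of_submultiplicative hmeas hnn hsub
  refine hK.induction_on (by simp) (fun s t hst ht => ht.mono (image_mono hst))
    (fun s t hs ht => by rw [image_union]; exact hs.union ht) fun x _ => ?_
  have hxV : (x⁻¹ * ·) ⁻¹' V ∈ 𝓝 x :=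
    (continuous_const.mul continuous_id).continuousAt.preimage_mem_nhds (by simpa using hV)
  refine ⟨_, mem_nhdsWithin_of_mem_nhds hxV, ω x * M, ?_⟩
  rintro _ ⟨y, hy, rfl⟩
  calc ω y = ω (x * (x⁻¹ * y)) := by rw [mul_inv_cancel_left]
    _ ≤ ω x * ω (x⁻¹ * y) := hsub _ _
    _ ≤ ω x * M := mul_le_mul_of_nonneg_left (hM (mem_image_of_mem ω hy)) (hnn x)

end SubmultiplicativeWeight

lemma Continuous.integrable_mul_of_hasCompactSupport_of_norm_le {X : Type*} [TopologicalSpace X]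
    [MeasurableSpace X] [OpensMeasurableSpace X] {μ : Measure X} [IsFiniteMeasureOnCompacts μ]
    {f ω : X → ℝ} {C : ℝ} (hf : Continuous f) (hfs : HasCompactSupport f)
    (hω : AEStronglyMeasurable ω μ) (hωC : ∀ x ∈ tsupport f, ‖ω x‖ ≤ C) :
    Integrable (fun x => f x * ω x) μ := by
  refine (integrableOn_iff_integrable_of_support_subset fun x hx => ?_).1
    (((hf.integrable_of_hasCompactSupport hfs).integrableOn).mul_bdd hω.restrict
      (ae_restrict_of_forall_mem (isClosed_tsupport f).measurableSet hωC))
  exact subset_tsupport f (left_ne_zero_of_mul hx)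

lemma rpow_integral_norm_rpow_mul_le {X E F : Type*} [MeasurableSpace X] {μ : Measure X}
    [NormedAddCommGroup E] [NormedAddCommGroup F] {f : X → E} {g : X → F} {ω : X → ℝ} {K p : ℝ}
    (hp : 0 < p) (hK : 0 ≤ K) (hω : ∀ x, 0 ≤ ω x) (hfg : ∀ x, ‖f x‖ ≤ K * ‖g x‖)
    (hg : Integrable (fun x => ‖g x‖ ^ p * ω x) μ) :
    (∫ x, ‖f x‖ ^ p * ω x ∂μ) ^ (1 / p) ≤ K * (∫ x, ‖g x‖ ^ p * ω x ∂μ) ^ (1 / p) := by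
  have hpoint : ∀ x, ‖f x‖ ^ p * ω x ≤ K ^ p * (‖g x‖ ^ p * ω x) := fun x => by
    rw [← mul_assoc, ← Real.mul_rpow hK (norm_nonneg _)]
    exact mul_le_mul_of_nonneg_right (Real.rpow_le_rpow (norm_nonneg _) (hfg x) hp.le) (hω x)
  have hg_nonneg : 0 ≤ ∫ x, ‖g x‖ ^ p * ω x ∂μ :=
    integral_nonneg fun x => mul_nonneg (by positivity) (hω x)
  calc (∫ x, ‖f x‖ ^ p * ω x ∂μ) ^ (1 / p)
      ≤ (∫ x, K ^ p * (‖g x‖ ^ p * ω x) ∂μ) ^ (1 / p) := by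
        refine Real.rpow_le_rpow (integral_nonneg fun x => mul_nonneg (by positivity) (hω x))
          (integral_mono_of_nonneg (Filter.Eventually.of_forall fun x =>
            mul_nonneg (by positivity) (hω x)) (hg.const_mul _)
            (Filter.Eventually.of_forall hpoint)) (by positivity)
    _ = K * (∫ x, ‖g x‖ ^ p * ω x ∂μ) ^ (1 / p) := by
        rw [integral_const_mul, Real.mul_rpow (by positivity) hg_nonneg, ← Real.rpow_mul hK,
          mul_one_div_cancel hp.ne', Real.rpow_one]

theorem stmt10_general {A G X : Type*} [NormedRing A] [NormedAlgebra ℂ A]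
    [NormedAddCommGroup X] [NormedSpace ℂ X]
    [Group G] [TopologicalSpace G] [IsTopologicalGroup G] [LocallyCompactSpace G]
    [MeasurableSpace G] [BorelSpace G]
    (μ : Measure G) [μ.IsHaarMeasure]
    (α : G →* (A ≃ₐ[ℂ] A))
    (Cα : ℝ) (hα : ∀ (s : G) (a : A), ‖α s a‖ ≤ Cα * ‖a‖)
    (π : A →L[ℂ] X →L[ℂ] X) (hπ : ∀ a b, π (a * b) = π a * π b)
    (ω : G → ℝ) (hmeas : Measurable ω) (hnn : ∀ s, 0 ≤ ω s)
    (hsub : ∀ s t, ω (s * t) ≤ ω s * ω t)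
    (p : ℝ) (hp : 1 ≤ p) :
    (∀ (a b : A) (h : G → X) (s : G),
        π (α s⁻¹ (a * b)) (h s) = π (α s⁻¹ a) (π (α s⁻¹ b) (h s))) ∧
      ∀ (a : A) (h : G → X), Continuous h → HasCompactSupport h →
        (∫ s, ‖π (α s⁻¹ a) (h s)‖ ^ p * ω s ∂μ) ^ (1 / p)
          ≤ Cα * ‖π‖ * ‖a‖ * (∫ s, ‖h s‖ ^ p * ω s ∂μ) ^ (1 / p) := by
  have hp0 : 0 < p := by linarith
  refine ⟨fun a b h s => by rw [map_mul, hπ]; rfl, fun a h hc hsupp => ?_⟩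
  have hCa : 0 ≤ Cα * ‖a‖ := (norm_nonneg _).trans (hα 1 a)
  have hpoint : ∀ s, ‖π (α s⁻¹ a) (h s)‖ ≤ Cα * ‖π‖ * ‖a‖ * ‖h s‖ := fun s => by
    rw [mul_right_comm Cα, mul_comm (Cα * ‖a‖)]
    exact (π.le_opNorm₂ _ _).trans (by gcongr; exact hα _ _)
  have hsupp_p : HasCompactSupport fun s => ‖h s‖ ^ p :=
    hsupp.comp_left (g := fun x : X => ‖x‖ ^ p) (by simp [Real.zero_rpow hp0.ne'])
  obtain ⟨M, hM⟩ := hsupp_p.isCompact.bddAbove_image_of_submultiplicative hmeas hnn hsub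
  have hint : Integrable (fun s => ‖h s‖ ^ p * ω s) μ :=
    (hc.norm.rpow_const fun _ => Or.inr hp0.le).integrable_mul_of_hasCompactSupport_of_norm_le
      hsupp_p hmeas.aestronglyMeasurable fun s hs => by
        rw [Real.norm_of_nonneg (hnn s)]; exact hM (mem_image_of_mem ω hs)
  exact rpow_integral_norm_rpow_mul_le hp0 (by rw [mul_right_comm]; positivity) hnn hpoint hint

/-- For a Banach algebra dynamical system `(A, G, α)` with `α` uniformly bounded by
`C_α`, a bounded representation `π : A → B(X)` and a weight `ω` on `G`, the induced
map `(π̃(a) h)(s) := π(α_{s⁻¹}(a)) h(s)` is an algebra homomorphism and satisfies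
`‖π̃(a) h‖_{p,ω} ≤ C_α ‖π‖ ‖a‖ ‖h‖_{p,ω}` on `C_c(G, X)`, hence extends to a bounded
operator on `L^p(G, X, ω)` of norm at most `C_α ‖π‖ ‖a‖`. -/
theorem stmt10 {A G X : Type*} [NormedRing A] [CompleteSpace A] [NormedAlgebra ℂ A]
    [NormedAddCommGroup X] [NormedSpace ℂ X] [CompleteSpace X]
    [Group G] [TopologicalSpace G] [IsTopologicalGroup G] [LocallyCompactSpace G]
    [MeasurableSpace G] [BorelSpace G]
    (μ : Measure G) [μ.IsHaarMeasure]
    (α : G →* (A ≃ₐ[ℂ] A)) (hcont : ∀ a : A, Continuous fun s => α s a)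
    (Cα : ℝ) (hα : ∀ (s : G) (a : A), ‖α s a‖ ≤ Cα * ‖a‖)
    (π : A →L[ℂ] X →L[ℂ] X) (hπ : ∀ a b, π (a * b) = π a * π b)
    (ω : G → ℝ) (hmeas : Measurable ω) (hnn : ∀ s, 0 ≤ ω s)
    (hsub : ∀ s t, ω (s * t) ≤ ω s * ω t) (hω0 : ∃ s, ω s ≠ 0)
    (p : ℝ) (hp : 1 ≤ p) :
    (∀ (a b : A) (h : G → X) (s : G),
        π (α s⁻¹ (a * b)) (h s) = π (α s⁻¹ a) (π (α s⁻¹ b) (h s))) ∧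
      ∀ (a : A) (h : G → X), Continuous h → HasCompactSupport h →
        (∫ s, ‖π (α s⁻¹ a) (h s)‖ ^ p * ω s ∂μ) ^ (1 / p)
          ≤ Cα * ‖π‖ * ‖a‖ * (∫ s, ‖h s‖ ^ p * ω s ∂μ) ^ (1 / p) :=
  stmt10_general μ α Cα hα π hπ ω hmeas hnn hsub p hp
end
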